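/- arXiv:math/0510543 — 2 statements merged into one kernel-verified Lean document; each statement's English description precedes it below -/
import Mathlib

section
/- Let F be a field of characteristic zero, A an additive abelian group, and ∂ : A → F an additive map with trivial kernel (∂(x) = 0 implies x = 0). Suppose f : A → F satisfies ∂(y − x)·f(x + y) = ∂(y)·f(y) − ∂(x)·f(x) for all x, y ∈ A. Then for any fixed x₀ ∈ A with x₀ ≠ 0, f(x) = ((f(2x₀) − f(x₀))/∂(x₀))·∂(x) + 2f(x₀) − f(2x₀) for all x ∈ A; in particular f(x) = b·∂(x) + a for some a, b ∈ F. -/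
/-!
Subtracting `f 0` keeps the equation (it is linear in `f` and constants solve it), so assume
`g 0 = 0`. Then `y = -x` shows that `g` is odd, and comparing the equation at `(x, y)` and
`(x, -y)` gives `∂(x - y) g(x + y) = ∂(x + y) g(x - y)`. At `(x + x, x)` this and the
equation at `(x, x + x)` force `g (x + x) = 2 g x`; at `(x + y, y - x)` it becomes
`∂(2x) g(2y) = ∂(2y) g(2x)`, so `∂x g(y) = ∂y g(x)` and `g` is a multiple of `∂`.
-/

section

variable {F : Type*} [Field F] {A : Type*} [AddCommGroup A]

def IsSolution (d : A →+ F) (f : A → F) : Prop :=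
  ∀ x y : A, d (y - x) * f (x + y) = d y * f y - d x * f x

variable {d : A →+ F} {f g : A → F}

theorem eq_of_map_mul_eq_map_mul (hd : ∀ x : A, d x = 0 → x = 0) {a b : A → F}
    (h0 : a 0 = b 0) {x : A} (h : d x * a x = d x * b x) : a x = b x := by
  by_cases hx : x = 0
  · rwa [hx]
  · exact mul_left_cancel₀ (fun h' => hx (hd x h')) h

namespace IsSolution

theorem sub_const (hf : IsSolution d f) (c : F) : IsSolution d (fun x => f x - c) := by
  intro x y
  linear_combination (hf x y) - c * (map_sub d y x)

section Normalized

variable (hg : IsSolution d g) (hd : ∀ x : A, d x = 0 → x = 0) (hg0 : g 0 = 0)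
include hg hd hg0

theorem neg_eq (x : A) : g (-x) = -g x := by
  refine eq_of_map_mul_eq_map_mul (a := fun x => g (-x)) (b := fun x => -g x) hd
    (by simp [hg0]) ?_
  have h := hg x (-x)
  rw [add_neg_cancel, hg0, map_neg] at h
  linear_combination h

theorem map_sub_mul_map_add (x y : A) : d (x - y) * g (x + y) = d (x + y) * g (x - y) := by
  have h₁ := hg x y
  have h₂ := hg x (-y)
  rw [neg_eq hg hd hg0, ← sub_eq_add_neg] at h₂
  simp only [map_sub, map_add, map_neg] at h₁ h₂ ⊢
  linear_combination h₂ - h₁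

theorem add_self [NeZero (2 : F)] (x : A) : g (x + x) = 2 * g x := by
  refine eq_of_map_mul_eq_map_mul (a := fun x => g (x + x)) (b := fun x => 2 * g x) hd
    (by simp [hg0]) ?_
  have h₁ := hg x (x + x)
  have h₂ := map_sub_mul_map_add hg hd hg0 (x + x) x
  rw [add_sub_cancel_right, ← add_assoc, map_add] at h₁
  rw [add_sub_cancel_right, map_add, map_add] at h₂
  refine mul_left_cancel₀ (two_ne_zero (α := F)) ?_
  linear_combination h₂ - h₁

theorem map_mul_apply_comm [NeZero (2 : F)] (x y : A) : d x * g y = d y * g x := by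
  have h := map_sub_mul_map_add hg hd hg0 (x + y) (y - x)
  rw [show x + y - (y - x) = x + x by abel, show x + y + (y - x) = y + y by abel,
    add_self hg hd hg0, add_self hg hd hg0, map_add, map_add] at h
  refine mul_left_cancel₀ (mul_ne_zero (two_ne_zero (α := F)) two_ne_zero) ?_
  linear_combination h

end Normalized

theorem exists_eq_mul_add [NeZero (2 : F)] (hd : ∀ x : A, d x = 0 → x = 0)
    (hf : IsSolution d f) :
    ∃ b : F, ∀ x : A, f x = b * d x + f 0 := by
  have hg := hf.sub_const (f 0)
  have hg0 : f 0 - f 0 = 0 := sub_self _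
  by_cases htriv : ∀ x : A, x = 0
  · exact ⟨0, fun x => by rw [htriv x, zero_mul, zero_add]⟩
  obtain ⟨x₀, hx₀⟩ := not_forall.mp htriv
  have hdx₀ : d x₀ ≠ 0 := fun h => hx₀ (hd x₀ h)
  refine ⟨(f x₀ - f 0) / d x₀, fun x => ?_⟩
  have h := map_mul_apply_comm hg hd hg0 x₀ x
  field_simp
  linear_combination h

end IsSolution
end

theorem stmt_2 {F : Type*} [Field F] [CharZero F]
    {A : Type*} [AddCommGroup A]
    (d : A →+ F) (hd : ∀ x : A, d x = 0 → x = 0)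
    (f : A → F)
    (hf : ∀ x y : A, d (y - x) * f (x + y) = d y * f y - d x * f x)
    (x₀ : A) (hx₀ : x₀ ≠ 0) :
    (∀ x : A, f x = ((f (x₀ + x₀) - f x₀) / d x₀) * d x + (2 * f x₀ - f (x₀ + x₀))) ∧
    (∃ a b : F, ∀ x : A, f x = b * d x + a) := by
  obtain ⟨b, hb⟩ := IsSolution.exists_eq_mul_add hd hf
  have hdx₀ : d x₀ ≠ 0 := fun h => hx₀ (hd x₀ h)
  refine ⟨fun x => ?_, ⟨f 0, b, hb⟩⟩
  rw [hb x, hb x₀, hb (x₀ + x₀), map_add]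
  field_simp
  ring
end

section
/- Let D₁ be the Lie algebra over a characteristic-zero field F with basis {L(x), I(x) : x ∈ A} for A an abelian group with nondegenerate additive map ∂ : A → F, and bracket [L(x),L(y)] = ∂(y−x)L(x+y), [L(x),I(y)] = ∂(y)I(x+y), [I(x),I(y)] = 0. Then the bilinear alternating map ψ₃ with ψ₃(L(x),I(y)) = δ_{x+y,0}·∂(x)² (and ψ₃ vanishing on pairs L,L and I,I) is a 2-cocycle on D₁. -/
/-- The bracket of the Lie algebra `D₁` of generalized differential operators of order at
most one, on basis elements: `Sum.inl x` stands for `L x = t^x ∂`, `Sum.inr x` for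
`I x = t^x`.  The result lives in the free module on the basis. -/
noncomputable def d1Bracket {F A : Type*} [Field F] [AddCommGroup A]
    (d : A →+ F) : (A ⊕ A) → (A ⊕ A) → ((A ⊕ A) →₀ F)
  | Sum.inl x, Sum.inl y => Finsupp.single (Sum.inl (x + y)) (d (y - x))
  | Sum.inl x, Sum.inr y => Finsupp.single (Sum.inr (x + y)) (d y)
  | Sum.inr x, Sum.inl y => Finsupp.single (Sum.inr (y + x)) (- d x)
  | Sum.inr _, Sum.inr _ => 0

/-- Evaluation of the bilinear extension of a map `ψ` on basis pairs, in its first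
argument, against an element of the free module. -/
noncomputable def pairEval {F A : Type*} [Field F] [AddCommGroup A]
    (ψ : (A ⊕ A) → (A ⊕ A) → F) (m : (A ⊕ A) →₀ F) (b : A ⊕ A) : F :=
  m.sum fun b' c => c * ψ b' b

/-!
Only the triples with two `L`'s and one `I` contribute to the cocycle identity, and by cyclic
symmetry one of them suffices: for `L x, L y, I z` all terms carry `δ_{x+y+z,0}`, and with
`a = ∂x`, `b = ∂y` the identity reduces to `(b - a)(a + b)² + (a + b)a² - (a + b)b² = 0`.
-/

open Sum

section

variable {F A : Type*} [Field F] [AddCommGroup A]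

theorem pairEval_single (ψ : (A ⊕ A) → (A ⊕ A) → F) (a : A ⊕ A) (c : F) (b : A ⊕ A) :
    pairEval ψ (Finsupp.single a c) b = c * ψ a b :=
  Finsupp.sum_single_index (by rw [zero_mul])

theorem pairEval_zero (ψ : (A ⊕ A) → (A ⊕ A) → F) (b : A ⊕ A) :
    pairEval ψ (0 : (A ⊕ A) →₀ F) b = 0 :=
  Finsupp.sum_zero_index

open Classical in
noncomputable def psi3 (d : A →+ F) : (A ⊕ A) → (A ⊕ A) → F
  | inl x, inr y => if x + y = 0 then d x ^ 2 else 0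
  | inr x, inl y => -(if y + x = 0 then d y ^ 2 else 0)
  | _, _ => 0

variable (d : A →+ F)

theorem psi3_antisymm (b₁ b₂ : A ⊕ A) : psi3 d b₁ b₂ = -psi3 d b₂ b₁ := by
  rcases b₁ with x | x <;> rcases b₂ with y | y <;> simp [psi3]

theorem psi3_cocycle_inl_inl_inr (x y z : A) :
    pairEval (psi3 d) (d1Bracket d (inl x) (inl y)) (inr z) +
      pairEval (psi3 d) (d1Bracket d (inl y) (inr z)) (inl x) +
        pairEval (psi3 d) (d1Bracket d (inr z) (inl x)) (inl y) = 0 := by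
  simp only [d1Bracket, pairEval_single, psi3]
  rcases eq_or_ne (x + y + z) 0 with h | h
  · obtain rfl : z = -(x + y) := eq_neg_of_add_eq_zero_right h
    simp only [add_neg_cancel, ite_true, map_neg, map_add, map_sub,
      show x + (y + -(x + y)) = 0 by abel, show y + (x + -(x + y)) = 0 by abel]
    ring
  · have h₁ : x + (y + z) ≠ 0 := by rwa [← add_assoc]
    have h₂ : y + (x + z) ≠ 0 := by rwa [add_left_comm, ← add_assoc]
    simp [h, h₁, h₂]

theorem psi3_cocycle (b₁ b₂ b₃ : A ⊕ A) :
    pairEval (psi3 d) (d1Bracket d b₁ b₂) b₃ + pairEval (psi3 d) (d1Bracket d b₂ b₃) b₁ +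
      pairEval (psi3 d) (d1Bracket d b₃ b₁) b₂ = 0 := by
  rcases b₁ with x | x <;> rcases b₂ with y | y <;> rcases b₃ with z | z
  case inl.inl.inr => exact psi3_cocycle_inl_inl_inr d x y z
  case inl.inr.inl => linear_combination psi3_cocycle_inl_inl_inr d z x y
  case inr.inl.inl => linear_combination psi3_cocycle_inl_inl_inr d y z x
  all_goals simp only [d1Bracket, pairEval_single, pairEval_zero, psi3, mul_zero, add_zero]

end

open Classical in
theorem stmt_4_general {F : Type*} [Field F]
    {A : Type*} [AddCommGroup A]
    (d : A →+ F)
    (ψ : (A ⊕ A) → (A ⊕ A) → F)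
    (hψ : ∀ x y : A, ψ (Sum.inl x) (Sum.inr y) = if x + y = 0 then (d x) ^ 2 else 0)
    (hψLL : ∀ x y : A, ψ (Sum.inl x) (Sum.inl y) = 0)
    (hψII : ∀ x y : A, ψ (Sum.inr x) (Sum.inr y) = 0)
    (hψIL : ∀ x y : A, ψ (Sum.inr x) (Sum.inl y) = - (if y + x = 0 then (d y) ^ 2 else 0)) :
    (∀ b₁ b₂ : A ⊕ A, ψ b₁ b₂ = - ψ b₂ b₁) ∧
    (∀ b₁ b₂ b₃ : A ⊕ A,
      pairEval ψ (d1Bracket d b₁ b₂) b₃ + pairEval ψ (d1Bracket d b₂ b₃) b₁ +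
        pairEval ψ (d1Bracket d b₃ b₁) b₂ = 0) := by
  obtain rfl : ψ = psi3 d := by
    funext b₁ b₂
    rcases b₁ with x | x <;> rcases b₂ with y | y
    exacts [hψLL x y, hψ x y, hψIL x y, hψII x y]
  exact ⟨psi3_antisymm d, psi3_cocycle d⟩

open Classical in
/-- The map `ψ₃` with `ψ₃(L x, I y) = δ_{x+y,0} ∂(x)²`, vanishing on the pairs (L,L) and (I,I), is an
(alternating) 2-cocycle on `D₁`. -/
theorem stmt_4 {F : Type*} [Field F] [CharZero F]
    {A : Type*} [AddCommGroup A]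
    (d : A →+ F) (hd : ∀ x : A, d x = 0 → x = 0)
    (ψ : (A ⊕ A) → (A ⊕ A) → F)
    (hψ : ∀ x y : A, ψ (Sum.inl x) (Sum.inr y) = if x + y = 0 then (d x) ^ 2 else 0)
    (hψLL : ∀ x y : A, ψ (Sum.inl x) (Sum.inl y) = 0)
    (hψII : ∀ x y : A, ψ (Sum.inr x) (Sum.inr y) = 0)
    (hψIL : ∀ x y : A, ψ (Sum.inr x) (Sum.inl y) = - (if y + x = 0 then (d y) ^ 2 else 0)) :
    (∀ b₁ b₂ : A ⊕ A, ψ b₁ b₂ = - ψ b₂ b₁) ∧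
    (∀ b₁ b₂ b₃ : A ⊕ A,
      pairEval ψ (d1Bracket d b₁ b₂) b₃ + pairEval ψ (d1Bracket d b₂ b₃) b₁ +
        pairEval ψ (d1Bracket d b₃ b₁) b₂ = 0) :=
  stmt_4_general d ψ hψ hψLL hψII hψIL
end
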